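/- arXiv:1912.00331 — 4 statements merged into one kernel-verified Lean document; each statement's English description precedes it below -/
import Mathlib

section
/- Given scalars u_t and λ_t > 0 satisfying the Afriat inequalities, the constructed utility U(β) = min_t {u_t + λ_t α_t'(β - β_t)} rationalizes the dataset: for each t, U(β_t) = u_t and β_t maximizes U over the budget set {β ∈ R^m_+ : α_t'β ≤ 1}, provided α_t'β_t = 1 for all t. -/
/-!
Each affine piece `u_s + λ_s α_s'(β - β_s)` lies above `u_t` at `β = β_t` by the Afriat
inequality, and the piece `s = t` equals `u_t` there, so `U(β_t) = u_t`. On the budget set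
`α_t'β ≤ 1 = α_t'β_t` the piece `s = t` is at most `u_t` because `λ_t ≥ 0`, and `U` lies below it.
-/

open Matrix Finset

section AfriatUtility

variable {ι n : Type*} [Fintype ι] [Nonempty ι] [Fintype n]

noncomputable def afriatUtility (us ls : ι → ℝ) (α β : ι → n → ℝ) (b : n → ℝ) : ℝ :=
  univ.inf' univ_nonempty fun t => us t + ls t * (α t ⬝ᵥ (b - β t))

variable {us ls : ι → ℝ} {α β : ι → n → ℝ}

theorem afriatUtility_le (t : ι) (b : n → ℝ) :
    afriatUtility us ls α β b ≤ us t + ls t * (α t ⬝ᵥ (b - β t)) :=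
  inf'_le _ (mem_univ t)

theorem afriatUtility_apply_eq
    (hAfriat : ∀ s t, us s - us t - ls t * (α t ⬝ᵥ (β s - β t)) ≤ 0) (t : ι) :
    afriatUtility us ls α β (β t) = us t := by
  refine le_antisymm ?_ (le_inf' _ _ fun s _ => by linarith [hAfriat t s])
  exact (afriatUtility_le t (β t)).trans_eq (by simp)

theorem afriatUtility_le_of_dotProduct_le {t : ι} (hls : 0 ≤ ls t) {b : n → ℝ}
    (hb : α t ⬝ᵥ b ≤ α t ⬝ᵥ β t) :
    afriatUtility us ls α β b ≤ us t := by
  have hdir : α t ⬝ᵥ (b - β t) ≤ 0 := by rw [dotProduct_sub]; linarith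
  calc afriatUtility us ls α β b ≤ us t + ls t * (α t ⬝ᵥ (b - β t)) := afriatUtility_le t b
    _ ≤ us t := by linarith [mul_nonpos_of_nonneg_of_nonpos hls hdir]

end AfriatUtility

theorem afriat_constructed_utility_rationalizes_general {m N : ℕ} (hN : 0 < N)
    (α β : Fin N → Fin m → ℝ)
    (hactive : ∀ t, α t ⬝ᵥ β t = 1)
    (us ls : Fin N → ℝ) (hls : ∀ t, 0 < ls t)
    (hAfriat : ∀ s t, us s - us t - ls t * (α t ⬝ᵥ (β s - β t)) ≤ 0)
    (U : (Fin m → ℝ) → ℝ)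
    (hU : ∀ b, U b = Finset.univ.inf' ⟨⟨0, hN⟩, Finset.mem_univ _⟩
      (fun t => us t + ls t * (α t ⬝ᵥ (b - β t)))) :
    ∀ t, U (β t) = us t ∧
      ∀ b : Fin m → ℝ, (∀ i, 0 ≤ b i) → α t ⬝ᵥ b ≤ 1 → U b ≤ U (β t) := by
  have : Nonempty (Fin N) := ⟨⟨0, hN⟩⟩
  obtain rfl : U = afriatUtility us ls α β := funext hU
  intro t
  have hvalue := afriatUtility_apply_eq hAfriat t
  refine ⟨hvalue, fun b _ hbudget => ?_⟩
  rw [hvalue]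
  exact afriatUtility_le_of_dotProduct_le (hls t).le (by rw [hactive t]; exact hbudget)

/-- The constructed Afriat utility rationalizes the dataset:
`U(β_t) = u_t` and `β_t` maximizes `U` over the budget set
`{β ≥ 0 : α_t'β ≤ 1}`, provided the budget constraints are active. -/
theorem afriat_constructed_utility_rationalizes {m N : ℕ} (hN : 0 < N)
    (α β : Fin N → Fin m → ℝ) (hα : ∀ t i, 0 < α t i) (hβ : ∀ t i, 0 ≤ β t i)
    (hactive : ∀ t, α t ⬝ᵥ β t = 1)
    (us ls : Fin N → ℝ) (hls : ∀ t, 0 < ls t)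
    (hAfriat : ∀ s t, us s - us t - ls t * (α t ⬝ᵥ (β s - β t)) ≤ 0)
    (U : (Fin m → ℝ) → ℝ)
    (hU : ∀ b, U b = Finset.univ.inf' ⟨⟨0, hN⟩, Finset.mem_univ _⟩
      (fun t => us t + ls t * (α t ⬝ᵥ (b - β t)))) :
    ∀ t, U (β t) = us t ∧
      ∀ b : Fin m → ℝ, (∀ i, 0 ≤ b i) → α t ⬝ᵥ b ≤ 1 → U b ≤ U (β t) :=
  afriat_constructed_utility_rationalizes_general hN α β hactive us ls hls hAfriat U hU
end

section
/- The solution P*(α, β) of the discrete-time algebraic Riccati equation P = A(P - P C'(C P C' + R(β))⁻¹ C P)A' + Q(α) is monotonically increasing in the observation noise covariance R(β) with respect to the positive semidefinite (Loewner) order: if R₁ ⪯ R₂ then P*(α, R₁) ⪯ P*(α, R₂). -/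
open Matrix

section AREmonoHelpers
variable {n p : ℕ}

noncomputable def ric (A : Matrix (Fin n) (Fin n) ℝ) (C : Matrix (Fin p) (Fin n) ℝ)
    (Q : Matrix (Fin n) (Fin n) ℝ) (P : Matrix (Fin n) (Fin n) ℝ)
    (R : Matrix (Fin p) (Fin p) ℝ) : Matrix (Fin n) (Fin n) ℝ :=
  A * (P - P * Cᵀ * (C * P * Cᵀ + R)⁻¹ * C * P) * Aᵀ + Q

noncomputable def phi (A : Matrix (Fin n) (Fin n) ℝ) (C : Matrix (Fin p) (Fin n) ℝ)
    (Q : Matrix (Fin n) (Fin n) ℝ) (P : Matrix (Fin n) (Fin n) ℝ)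
    (R : Matrix (Fin p) (Fin p) ℝ) (K : Matrix (Fin n) (Fin p) ℝ) : Matrix (Fin n) (Fin n) ℝ :=
  (A - K * C) * P * (A - K * C)ᵀ + K * R * Kᵀ + Q

lemma key (A : Matrix (Fin n) (Fin n) ℝ) (C : Matrix (Fin p) (Fin n) ℝ)
    (Q P : Matrix (Fin n) (Fin n) ℝ) (R : Matrix (Fin p) (Fin p) ℝ)
    (K : Matrix (Fin n) (Fin p) ℝ)
    (hP : Pᵀ = P) (hSt : (C * P * Cᵀ + R)ᵀ = C * P * Cᵀ + R)
    (hdet : IsUnit (C * P * Cᵀ + R).det) :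
    phi A C Q P R K = ric A C Q P R +
      (K - A * P * Cᵀ * (C * P * Cᵀ + R)⁻¹) * (C * P * Cᵀ + R) *
        (K - A * P * Cᵀ * (C * P * Cᵀ + R)⁻¹)ᵀ := by
  have hTt : ((C * P * Cᵀ + R)⁻¹)ᵀ = (C * P * Cᵀ + R)⁻¹ := by
    rw [transpose_nonsing_inv, hSt]
  have hST : (C * P * Cᵀ + R) * (C * P * Cᵀ + R)⁻¹ = 1 := mul_nonsing_inv _ hdet
  have hTS : (C * P * Cᵀ + R)⁻¹ * (C * P * Cᵀ + R) = 1 := nonsing_inv_mul _ hdet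
  have e1 : (K - A * P * Cᵀ * (C * P * Cᵀ + R)⁻¹)ᵀ
      = Kᵀ - (C * P * Cᵀ + R)⁻¹ * (C * (P * Aᵀ)) := by
    rw [transpose_sub, transpose_mul, transpose_mul, transpose_mul, hTt, transpose_transpose,
      hP, Matrix.mul_assoc]
  have hA : A * P * Cᵀ * (C * P * Cᵀ + R)⁻¹ * (C * P * Cᵀ + R) = A * P * Cᵀ := by
    rw [Matrix.mul_assoc (A * P * Cᵀ), hTS, Matrix.mul_one]
  have hC : (C * P * Cᵀ + R) * ((C * P * Cᵀ + R)⁻¹ * (C * (P * Aᵀ))) = C * (P * Aᵀ) := by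
    rw [← Matrix.mul_assoc, hST, Matrix.one_mul]
  have hsq : (K - A * P * Cᵀ * (C * P * Cᵀ + R)⁻¹) * (C * P * Cᵀ + R) *
        (K - A * P * Cᵀ * (C * P * Cᵀ + R)⁻¹)ᵀ
      = K * (C * P * Cᵀ + R) * Kᵀ - K * (C * (P * Aᵀ)) - A * P * Cᵀ * Kᵀ
        + A * P * Cᵀ * ((C * P * Cᵀ + R)⁻¹ * (C * (P * Aᵀ))) := by
    rw [e1]
    simp only [Matrix.sub_mul, Matrix.mul_sub]
    rw [hA, Matrix.mul_assoc K (C * P * Cᵀ + R) ((C * P * Cᵀ + R)⁻¹ * (C * (P * Aᵀ))), hC]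
    abel
  rw [hsq, phi, ric]
  simp only [transpose_sub, transpose_mul, hP, Matrix.mul_add, Matrix.add_mul,
    Matrix.mul_sub, Matrix.sub_mul, Matrix.mul_assoc]
  abel

variable {n p : ℕ}

lemma psd_conj {m k : ℕ} {M : Matrix (Fin m) (Fin m) ℝ} (hM : M.PosSemidef)
    (X : Matrix (Fin k) (Fin m) ℝ) : (X * M * Xᵀ).PosSemidef := by
  have := hM.mul_mul_conjTranspose_same X
  rwa [conjTranspose_eq_transpose_of_trivial] at this

lemma psd_symm {m : ℕ} {M : Matrix (Fin m) (Fin m) ℝ} (hM : M.PosSemidef) : Mᵀ = M := by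
  have := hM.isHermitian
  rwa [IsHermitian, conjTranspose_eq_transpose_of_trivial] at this

lemma S_posdef {P : Matrix (Fin n) (Fin n) ℝ} {R : Matrix (Fin p) (Fin p) ℝ}
    (hP : P.PosSemidef) (hR : R.PosDef) (C : Matrix (Fin p) (Fin n) ℝ) :
    (C * P * Cᵀ + R).PosDef :=
  Matrix.PosDef.posSemidef_add (psd_conj hP C) hR

lemma S_isUnit_det {P : Matrix (Fin n) (Fin n) ℝ} {R : Matrix (Fin p) (Fin p) ℝ}
    (hP : P.PosSemidef) (hR : R.PosDef) (C : Matrix (Fin p) (Fin n) ℝ) :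
    IsUnit (C * P * Cᵀ + R).det :=
  isUnit_iff_ne_zero.mpr (S_posdef hP hR C).det_pos.ne'

lemma S_symm {P : Matrix (Fin n) (Fin n) ℝ} {R : Matrix (Fin p) (Fin p) ℝ}
    (hP : P.PosSemidef) (hR : R.PosDef) (C : Matrix (Fin p) (Fin n) ℝ) :
    (C * P * Cᵀ + R)ᵀ = C * P * Cᵀ + R :=
  psd_symm (S_posdef hP hR C).posSemidef

lemma ric_eq_phi (A : Matrix (Fin n) (Fin n) ℝ) (C : Matrix (Fin p) (Fin n) ℝ)
    (Q P : Matrix (Fin n) (Fin n) ℝ) (R : Matrix (Fin p) (Fin p) ℝ)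
    (hP : P.PosSemidef) (hR : R.PosDef) :
    ric A C Q P R = phi A C Q P R (A * P * Cᵀ * (C * P * Cᵀ + R)⁻¹) := by
  rw [key A C Q P R _ (psd_symm hP) (S_symm hP hR C) (S_isUnit_det hP hR C)]
  simp [sub_self]

lemma ric_psd (A : Matrix (Fin n) (Fin n) ℝ) (C : Matrix (Fin p) (Fin n) ℝ)
    {Q P : Matrix (Fin n) (Fin n) ℝ} {R : Matrix (Fin p) (Fin p) ℝ}
    (hQ : Q.PosSemidef) (hP : P.PosSemidef) (hR : R.PosDef) :
    (ric A C Q P R).PosSemidef := by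
  rw [ric_eq_phi A C Q P R hP hR, phi]
  exact ((psd_conj hP _).add (psd_conj hR.posSemidef _)).add hQ

lemma ric_mono (A : Matrix (Fin n) (Fin n) ℝ) (C : Matrix (Fin p) (Fin n) ℝ)
    (Q : Matrix (Fin n) (Fin n) ℝ) {P P' : Matrix (Fin n) (Fin n) ℝ}
    {R R' : Matrix (Fin p) (Fin p) ℝ}
    (hP : P.PosSemidef) (hP' : P'.PosSemidef) (hPP' : (P' - P).PosSemidef)
    (hR : R.PosDef) (hR' : R'.PosDef) (hRR' : (R' - R).PosSemidef) :
    (ric A C Q P' R' - ric A C Q P R).PosSemidef := by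
  set K' := A * P' * Cᵀ * (C * P' * Cᵀ + R')⁻¹ with hK'
  have h1 : ric A C Q P' R' = phi A C Q P' R' K' := ric_eq_phi A C Q P' R' hP' hR'
  have h2 : phi A C Q P R K' = ric A C Q P R +
      (K' - A * P * Cᵀ * (C * P * Cᵀ + R)⁻¹) * (C * P * Cᵀ + R) *
        (K' - A * P * Cᵀ * (C * P * Cᵀ + R)⁻¹)ᵀ :=
    key A C Q P R K' (psd_symm hP) (S_symm hP hR C) (S_isUnit_det hP hR C)
  have h3 : phi A C Q P' R' K' - phi A C Q P R K'
      = (A - K' * C) * (P' - P) * (A - K' * C)ᵀ + K' * (R' - R) * K'ᵀ := by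
    rw [phi, phi]
    simp only [Matrix.mul_sub, Matrix.sub_mul]
    abel
  have h4 : ric A C Q P' R' - ric A C Q P R
      = ((A - K' * C) * (P' - P) * (A - K' * C)ᵀ + K' * (R' - R) * K'ᵀ) +
        (K' - A * P * Cᵀ * (C * P * Cᵀ + R)⁻¹) * (C * P * Cᵀ + R) *
          (K' - A * P * Cᵀ * (C * P * Cᵀ + R)⁻¹)ᵀ := by
    rw [h1, ← h3, h2]; abel
  rw [h4]
  exact ((psd_conj hPP' _).add (psd_conj hRR' _)).add
    (psd_conj (S_posdef hP hR C).posSemidef _)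

open Filter Topology

lemma psd_of_tendsto {m : ℕ} {M : ℕ → Matrix (Fin m) (Fin m) ℝ} {L : Matrix (Fin m) (Fin m) ℝ}
    (h : Tendsto M atTop (𝓝 L)) (hM : ∀ k, (M k).PosSemidef) : L.PosSemidef := by
  refine posSemidef_iff_dotProduct_mulVec.mpr ⟨?_, ?_⟩
  · have hc : Continuous fun X : Matrix (Fin m) (Fin m) ℝ => Xᴴ :=
      (continuous_id.matrix_transpose).matrix_map continuous_star
    have h2 : Tendsto (fun k => (M k)ᴴ) atTop (𝓝 Lᴴ) := (hc.tendsto L).comp h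
    have h3 : (fun k => (M k)ᴴ) = M := funext fun k => (hM k).1
    rw [h3] at h2
    exact tendsto_nhds_unique h2 h
  · intro x
    have hc : Continuous fun X : Matrix (Fin m) (Fin m) ℝ => star x ⬝ᵥ X *ᵥ x :=
      continuous_const.dotProduct (continuous_id.matrix_mulVec continuous_const)
    have h2 : Tendsto (fun k => star x ⬝ᵥ (M k) *ᵥ x) atTop (𝓝 (star x ⬝ᵥ L *ᵥ x)) :=
      (hc.tendsto L).comp h
    exact ge_of_tendsto' h2 fun k => (hM k).dotProduct_mulVec_nonneg x

lemma quad_single {m : ℕ} (M : Matrix (Fin m) (Fin m) ℝ) (i j : Fin m) :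
    (Pi.single i 1 : Fin m → ℝ) ⬝ᵥ M *ᵥ (Pi.single j 1 : Fin m → ℝ) = M i j := by
  simp [dotProduct, mulVec, Pi.single_apply, Finset.sum_ite_eq', mul_comm]

lemma entry_formula {m : ℕ} {M : Matrix (Fin m) (Fin m) ℝ} (hM : Mᵀ = M) (i j : Fin m) :
    M i j = (((Pi.single i 1 + Pi.single j 1 : Fin m → ℝ) ⬝ᵥ
        M *ᵥ (Pi.single i 1 + Pi.single j 1 : Fin m → ℝ))
      - (Pi.single i 1 : Fin m → ℝ) ⬝ᵥ M *ᵥ (Pi.single i 1 : Fin m → ℝ)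
      - (Pi.single j 1 : Fin m → ℝ) ⬝ᵥ M *ᵥ (Pi.single j 1 : Fin m → ℝ)) / 2 := by
  have hji : M j i = M i j := congrFun (congrFun hM i) j
  simp only [add_dotProduct, mulVec_add, dotProduct_add, quad_single, hji]
  ring

end AREmonoHelpers

open Filter Topology

/-- The (unique positive semidefinite) solution of the discrete-time
algebraic Riccati equation is monotone increasing in the observation noise
covariance `R` with respect to the Loewner order. -/
theorem are_monotone_in_R {n p : ℕ}
    (A : Matrix (Fin n) (Fin n) ℝ) (C : Matrix (Fin p) (Fin n) ℝ)
    (Q : Matrix (Fin n) (Fin n) ℝ) (R₁ R₂ : Matrix (Fin p) (Fin p) ℝ)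
    (hQ : Q.PosDef) (hR₁ : R₁.PosDef) (hR₂ : R₂.PosDef)
    (hR : (R₂ - R₁).PosSemidef)
    (P₁ P₂ : Matrix (Fin n) (Fin n) ℝ)
    (hP₁ : P₁.PosSemidef) (hP₂ : P₂.PosSemidef)
    (heq₁ : P₁ = A * (P₁ - P₁ * Cᵀ * (C * P₁ * Cᵀ + R₁)⁻¹ * C * P₁) * Aᵀ + Q)
    (heq₂ : P₂ = A * (P₂ - P₂ * Cᵀ * (C * P₂ * Cᵀ + R₂)⁻¹ * C * P₂) * Aᵀ + Q)
    (huniq₁ : ∀ P : Matrix (Fin n) (Fin n) ℝ, P.PosSemidef →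
      P = A * (P - P * Cᵀ * (C * P * Cᵀ + R₁)⁻¹ * C * P) * Aᵀ + Q → P = P₁)
    (huniq₂ : ∀ P : Matrix (Fin n) (Fin n) ℝ, P.PosSemidef →
      P = A * (P - P * Cᵀ * (C * P * Cᵀ + R₂)⁻¹ * C * P) * Aᵀ + Q → P = P₂) :
    (P₂ - P₁).PosSemidef := by
  classical
  -- the Riccati iteration started at 0, with noise R₁
  set seq : ℕ → Matrix (Fin n) (Fin n) ℝ :=
    fun k => (fun P => ric A C Q P R₁)^[k] 0 with hseq
  have hseq0 : seq 0 = 0 := rfl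
  have hseqS : ∀ k, seq (k + 1) = ric A C Q (seq k) R₁ := fun k =>
    Function.iterate_succ_apply' _ k 0
  have hQpsd := hQ.posSemidef
  have hzero : (0 : Matrix (Fin n) (Fin n) ℝ).PosSemidef := Matrix.PosSemidef.zero
  -- every iterate is psd
  have hpsd : ∀ k, (seq k).PosSemidef := by
    intro k; induction k with
    | zero => exact hzero
    | succ k ih => rw [hseqS]; exact ric_psd A C hQpsd ih hR₁
  have hRRself : (R₁ - R₁).PosSemidef := by rw [sub_self]; exact Matrix.PosSemidef.zero
  -- the iterates increase
  have hmono : ∀ k, (seq (k + 1) - seq k).PosSemidef := by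
    intro k; induction k with
    | zero => rw [hseq0, sub_zero, hseqS]; exact ric_psd A C hQpsd hzero hR₁
    | succ k ih =>
      have h2 := ric_mono A C Q (hpsd k) (hpsd (k + 1)) ih hR₁ hR₁ hRRself
      rw [← hseqS, ← hseqS] at h2
      exact h2
  have heq₂' : ric A C Q P₂ R₂ = P₂ := heq₂.symm
  -- the iterates are bounded above by P₂
  have hbdd : ∀ k, (P₂ - seq k).PosSemidef := by
    intro k; induction k with
    | zero => rw [hseq0, sub_zero]; exact hP₂
    | succ k ih =>
      rw [hseqS, ← heq₂']
      exact ric_mono A C Q (hpsd k) hP₂ ih hR₁ hR₂ hR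
  -- quadratic forms converge
  have hquadconv : ∀ x : Fin n → ℝ,
      Tendsto (fun k => x ⬝ᵥ (seq k) *ᵥ x) atTop (𝓝 (⨆ k, x ⬝ᵥ (seq k) *ᵥ x)) := by
    intro x
    apply tendsto_atTop_ciSup
    · apply monotone_nat_of_le_succ
      intro k
      have h0 := (hmono k).dotProduct_mulVec_nonneg x
      rw [star_trivial, sub_mulVec, dotProduct_sub, sub_nonneg] at h0
      exact h0
    · refine ⟨x ⬝ᵥ P₂ *ᵥ x, ?_⟩
      rintro y ⟨k, rfl⟩
      have h0 := (hbdd k).dotProduct_mulVec_nonneg x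
      rw [star_trivial, sub_mulVec, dotProduct_sub, sub_nonneg] at h0
      exact h0
  set L : (Fin n → ℝ) → ℝ := fun x => ⨆ k, x ⬝ᵥ (seq k) *ᵥ x with hL
  -- the limit matrix, recovered from limits of quadratic forms
  set Pinf : Matrix (Fin n) (Fin n) ℝ := Matrix.of fun i j =>
    (L (Pi.single i 1 + Pi.single j 1) - L (Pi.single i 1) - L (Pi.single j 1)) / 2 with hPinfdef
  have hconv : Tendsto seq atTop (𝓝 Pinf) := by
    refine tendsto_pi_nhds.mpr ?_
    intro i
    rw [tendsto_pi_nhds]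
    intro j
    have hrw : ∀ k, seq k i j =
        ((Pi.single i 1 + Pi.single j 1 : Fin n → ℝ) ⬝ᵥ
            (seq k) *ᵥ (Pi.single i 1 + Pi.single j 1 : Fin n → ℝ)
          - (Pi.single i 1 : Fin n → ℝ) ⬝ᵥ (seq k) *ᵥ (Pi.single i 1 : Fin n → ℝ)
          - (Pi.single j 1 : Fin n → ℝ) ⬝ᵥ (seq k) *ᵥ (Pi.single j 1 : Fin n → ℝ)) / 2 :=
      fun k => entry_formula (psd_symm (hpsd k)) i j
    simp only [hrw]
    exact (((hquadconv _).sub (hquadconv _)).sub (hquadconv _)).div_const 2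
  have hPinf : Pinf.PosSemidef := psd_of_tendsto hconv hpsd
  have hgap : (P₂ - Pinf).PosSemidef :=
    psd_of_tendsto (tendsto_const_nhds.sub hconv) hbdd
  -- passing to the limit in the iteration: Pinf is a fixed point
  have hdetinf : (C * Pinf * Cᵀ + R₁).det ≠ 0 := (S_posdef hPinf hR₁ C).det_pos.ne'
  have hScont : Continuous fun X : Matrix (Fin n) (Fin n) ℝ => C * X * Cᵀ + R₁ :=
    ((continuous_const.matrix_mul continuous_id).matrix_mul continuous_const).add
      continuous_const
  have hSconv : Tendsto (fun k => C * seq k * Cᵀ + R₁) atTop (𝓝 (C * Pinf * Cᵀ + R₁)) :=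
    (hScont.tendsto Pinf).comp hconv
  have hinvdef : ∀ M : Matrix (Fin p) (Fin p) ℝ, M⁻¹ = (M.det)⁻¹ • M.adjugate := by
    intro M; rw [Matrix.inv_def, Ring.inverse_eq_inv']
  have hdetconv : Tendsto (fun k => (C * seq k * Cᵀ + R₁).det) atTop
      (𝓝 ((C * Pinf * Cᵀ + R₁).det)) :=
    ((continuous_id.matrix_det).tendsto _).comp hSconv
  have hadjconv : Tendsto (fun k => (C * seq k * Cᵀ + R₁).adjugate) atTop
      (𝓝 ((C * Pinf * Cᵀ + R₁).adjugate)) :=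
    ((continuous_id.matrix_adjugate).tendsto _).comp hSconv
  have hinvconv : Tendsto (fun k => (C * seq k * Cᵀ + R₁)⁻¹) atTop
      (𝓝 ((C * Pinf * Cᵀ + R₁)⁻¹)) := by
    simp only [hinvdef]
    exact (hdetconv.inv₀ hdetinf).smul hadjconv
  have hFcont : Continuous fun z : Matrix (Fin n) (Fin n) ℝ × Matrix (Fin p) (Fin p) ℝ =>
      A * (z.1 - z.1 * Cᵀ * z.2 * C * z.1) * Aᵀ + Q := by
    refine Continuous.add (f := fun z : Matrix (Fin n) (Fin n) ℝ × Matrix (Fin p) (Fin p) ℝ =>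
      A * (z.1 - z.1 * Cᵀ * z.2 * C * z.1) * Aᵀ)
      ((continuous_const.matrix_mul ?_).matrix_mul continuous_const) continuous_const
    exact continuous_fst.sub
      ((((continuous_fst.matrix_mul continuous_const).matrix_mul continuous_snd).matrix_mul
        continuous_const).matrix_mul continuous_fst)
  have hricconv : Tendsto (fun k => ric A C Q (seq k) R₁) atTop (𝓝 (ric A C Q Pinf R₁)) := by
    have heqf : (fun k => ric A C Q (seq k) R₁) =
        (fun z : Matrix (Fin n) (Fin n) ℝ × Matrix (Fin p) (Fin p) ℝ =>
          A * (z.1 - z.1 * Cᵀ * z.2 * C * z.1) * Aᵀ + Q) ∘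
        (fun k => (seq k, (C * seq k * Cᵀ + R₁)⁻¹)) := by
      funext k
      simp only [Function.comp_apply, ric]
    rw [heqf, ric]
    exact (hFcont.tendsto (Pinf, (C * Pinf * Cᵀ + R₁)⁻¹)).comp (hconv.prodMk_nhds hinvconv)
  have hshift : Tendsto (fun k => seq (k + 1)) atTop (𝓝 Pinf) :=
    hconv.comp (tendsto_add_atTop_nat 1)
  have hshift' : Tendsto (fun k => ric A C Q (seq k) R₁) atTop (𝓝 Pinf) := by
    have h : (fun k => seq (k + 1)) = fun k => ric A C Q (seq k) R₁ := funext hseqS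
    rwa [h] at hshift
  have hfixed : ric A C Q Pinf R₁ = Pinf := tendsto_nhds_unique hricconv hshift'
  rw [ric] at hfixed
  -- by uniqueness, Pinf = P₁
  have hPinfP₁ : Pinf = P₁ := huniq₁ Pinf hPinf hfixed.symm
  rwa [hPinfP₁] at hgap
end

section
/- For the discrete-time algebraic Riccati equation, the unique stabilizing solution P* is monotonically increasing in the state noise covariance Q: if Q₁ ⪯ Q₂ (Loewner order) then P*(Q₁, R) ⪯ P*(Q₂, R). -/
/-!
The posterior covariance `P - P Cᵀ (C P Cᵀ + R)⁻¹ C P` is the Loewner-minimum over all gains `K`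
of the Joseph form `(1 - K C) P (1 - K C)ᵀ + K R Kᵀ`, which is monotone in `P` for fixed `K`; hence
the Riccati map `F_Q P = A (P - P Cᵀ (C P Cᵀ + R)⁻¹ C P) Aᵀ + Q` is monotone on positive
semidefinite matrices. Since `F_{Q₁} P₂ ≤ F_{Q₂} P₂ = P₂`, the iterates of `F_{Q₁}` started at `P₂`
decrease and stay positive semidefinite, so they converge to a positive semidefinite fixed point
of `F_{Q₁}` below `P₂`, which is `P₁` by uniqueness.
-/

open Matrix Filter Topology Set Function
open scoped MatrixOrder

theorem antitone_iterate_of_monotoneOn {α : Type*} [Preorder α] {f : α → α} {s : Set α}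
    (hf : MonotoneOn f s) (hs : MapsTo f s s) {x : α} (hx : x ∈ s) (hfx : f x ≤ x) :
    Antitone fun k => f^[k] x := by
  refine antitone_nat_of_succ_le fun k => ?_
  induction k with
  | zero => exact hfx
  | succ k ih =>
    simpa only [iterate_succ_apply'] using hf (hs.iterate _ hx) (hs.iterate _ hx) ih

namespace Matrix

theorem PosSemidef.transpose_eq {n : Type*} {P : Matrix n n ℝ} (hP : P.PosSemidef) : Pᵀ = P := by
  simpa only [IsHermitian, conjTranspose_eq_transpose_of_trivial] using hP.isHermitian

variable {m n : Type*} [Fintype m] [Fintype n]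

theorem PosSemidef.mul_mul_transpose_same {P : Matrix n n ℝ} (hP : P.PosSemidef)
    (B : Matrix m n ℝ) : (B * P * Bᵀ).PosSemidef := by
  simpa only [conjTranspose_eq_transpose_of_trivial] using hP.mul_mul_conjTranspose_same B

theorem mul_mul_transpose_mono (B : Matrix m n ℝ) {P P' : Matrix n n ℝ} (h : P ≤ P') :
    B * P * Bᵀ ≤ B * P' * Bᵀ := by
  rw [le_iff, ← Matrix.sub_mul, ← Matrix.mul_sub]
  exact (le_iff.1 h).mul_mul_transpose_same B

theorem isClosed_setOf_posSemidef : IsClosed {P : Matrix n n ℝ | P.PosSemidef} := by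
  have hherm : IsClosed {P : Matrix n n ℝ | Pᴴ = P} :=
    isClosed_eq continuous_id.matrix_conjTranspose continuous_id
  have hform (x : n → ℝ) : IsClosed {P : Matrix n n ℝ | 0 ≤ star x ⬝ᵥ P *ᵥ x} :=
    isClosed_le continuous_const (by fun_prop)
  convert hherm.inter (isClosed_iInter hform) using 1
  ext P
  exact ⟨fun h => ⟨h.isHermitian, mem_iInter.2 h.dotProduct_mulVec_nonneg⟩,
    fun h => .of_dotProduct_mulVec_nonneg h.1 (mem_iInter.1 h.2)⟩

instance : OrderClosedTopology (Matrix n n ℝ) where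
  isClosed_le' := isClosed_setOf_posSemidef.preimage (by fun_prop)

variable [DecidableEq n]

theorem apply_eq_polarization {M : Matrix n n ℝ} (hM : Mᵀ = M) (i j : n) :
    M i j = ((Pi.single i 1 + Pi.single j 1) ⬝ᵥ M *ᵥ (Pi.single i 1 + Pi.single j 1)
      - (Pi.single i 1 - Pi.single j 1) ⬝ᵥ M *ᵥ (Pi.single i 1 - Pi.single j 1)) / 4 := by
  have hji : M j i = M i j := by rw [← transpose_apply M i j, hM]
  simp only [dotProduct_add, add_dotProduct, dotProduct_sub, sub_dotProduct, mulVec_add,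
    mulVec_sub, mulVec_single_one, single_dotProduct, col_apply, one_mul, hji]
  ring

theorem exists_tendsto_of_antitone {M : ℕ → Matrix n n ℝ} (hM : Antitone M)
    (h0 : ∀ k, 0 ≤ M k) : ∃ L, Tendsto M atTop (𝓝 L) := by
  have hform (x : n → ℝ) : ∃ c, Tendsto (fun k => x ⬝ᵥ M k *ᵥ x) atTop (𝓝 c) := by
    refine ⟨_, tendsto_atTop_ciInf (fun k l hkl => ?_) ⟨0, ?_⟩⟩
    · simpa [star_trivial, sub_mulVec] using (le_iff.1 (hM hkl)).dotProduct_mulVec_nonneg x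
    · rintro _ ⟨k, rfl⟩
      simpa [star_trivial] using (h0 k).posSemidef.dotProduct_mulVec_nonneg x
  choose q hq using hform
  refine ⟨of fun i j =>
      (q (Pi.single i 1 + Pi.single j 1) - q (Pi.single i 1 - Pi.single j 1)) / 4,
    tendsto_pi_nhds.2 fun i => tendsto_pi_nhds.2 fun j => ?_⟩
  simp_rw [apply_eq_polarization (h0 _).posSemidef.transpose_eq i j]
  exact ((hq _).sub (hq _)).div_const 4

end Matrix

section Riccati

variable {n p : Type*} [Fintype n] [Fintype p]
  {A : Matrix n n ℝ} {C : Matrix p n ℝ} {R : Matrix p p ℝ} {Q P P' : Matrix n n ℝ}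

theorem posDef_innovationCov (hR : R.PosDef) (hP : P.PosSemidef) :
    (C * P * Cᵀ + R).PosDef :=
  PosDef.posSemidef_add (hP.mul_mul_transpose_same C) hR

section JosephForm

variable [DecidableEq n]

def josephForm (C : Matrix p n ℝ) (R : Matrix p p ℝ) (P : Matrix n n ℝ) (K : Matrix n p ℝ) :
    Matrix n n ℝ :=
  (1 - K * C) * P * (1 - K * C)ᵀ + K * R * Kᵀ

theorem josephForm_eq (K : Matrix n p ℝ) :
    josephForm C R P K = P - K * (C * P) - P * Cᵀ * Kᵀ + K * (C * P * Cᵀ + R) * Kᵀ := by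
  simp only [josephForm, transpose_sub, transpose_mul, transpose_one, Matrix.sub_mul,
    Matrix.mul_sub, Matrix.add_mul, Matrix.mul_add, Matrix.one_mul, Matrix.mul_one,
    Matrix.mul_assoc]
  abel

theorem posSemidef_josephForm (hR : R.PosSemidef) (hP : P.PosSemidef) (K : Matrix n p ℝ) :
    (josephForm C R P K).PosSemidef :=
  (hP.mul_mul_transpose_same _).add (hR.mul_mul_transpose_same K)

theorem josephForm_mono (K : Matrix n p ℝ) (h : P ≤ P') :
    josephForm C R P K ≤ josephForm C R P' K :=
  add_le_add_left (mul_mul_transpose_mono _ h) _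

end JosephForm

variable [DecidableEq p]

noncomputable def kalmanGain (C : Matrix p n ℝ) (R : Matrix p p ℝ) (P : Matrix n n ℝ) :
    Matrix n p ℝ :=
  P * Cᵀ * (C * P * Cᵀ + R)⁻¹

noncomputable def posteriorCov (C : Matrix p n ℝ) (R : Matrix p p ℝ) (P : Matrix n n ℝ) :
    Matrix n n ℝ :=
  P - kalmanGain C R P * C * P

noncomputable def riccatiMap (A : Matrix n n ℝ) (C : Matrix p n ℝ) (R : Matrix p p ℝ)
    (Q P : Matrix n n ℝ) : Matrix n n ℝ :=
  A * posteriorCov C R P * Aᵀ + Q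

theorem riccatiMap_mono_noise {Q' : Matrix n n ℝ} (h : Q ≤ Q') :
    riccatiMap A C R Q P ≤ riccatiMap A C R Q' P :=
  add_le_add_right h _

theorem continuousAt_riccatiMap (hR : R.PosDef) (hP : P.PosSemidef) :
    ContinuousAt (riccatiMap A C R Q) P := by
  have hS_det : IsUnit (C * P * Cᵀ + R).det :=
    (isUnit_iff_isUnit_det _).1 (posDef_innovationCov hR hP).isUnit
  have hinv : ContinuousAt (fun P : Matrix n n ℝ => (C * P * Cᵀ + R)⁻¹) P :=
    (continuousAt_matrix_inv _ (NormedRing.inverse_continuousAt hS_det.unit)).comp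
      (f := fun P : Matrix n n ℝ => C * P * Cᵀ + R) (by fun_prop)
  unfold riccatiMap posteriorCov kalmanGain
  fun_prop

variable [DecidableEq n]

theorem josephForm_sub_posteriorCov (hR : R.PosDef) (hP : P.PosSemidef) (K : Matrix n p ℝ) :
    josephForm C R P K - posteriorCov C R P
      = (K - kalmanGain C R P) * (C * P * Cᵀ + R) * (K - kalmanGain C R P)ᵀ := by
  have hS := posDef_innovationCov (C := C) hR hP
  have hS_det : IsUnit (C * P * Cᵀ + R).det := (isUnit_iff_isUnit_det _).1 hS.isUnit
  rw [josephForm_eq, posteriorCov, Matrix.mul_assoc (kalmanGain C R P)]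
  set S := C * P * Cᵀ + R
  have hG : kalmanGain C R P * S = P * Cᵀ := by
    rw [kalmanGain, Matrix.mul_assoc, nonsing_inv_mul _ hS_det, Matrix.mul_one]
  have hGt : S * (kalmanGain C R P)ᵀ = C * P := by
    rw [kalmanGain, transpose_mul, transpose_nonsing_inv, transpose_mul, transpose_transpose,
      hP.transpose_eq, hS.posSemidef.transpose_eq, ← Matrix.mul_assoc,
      mul_nonsing_inv _ hS_det, Matrix.one_mul]
  rw [← hG, ← hGt]
  simp only [transpose_sub, Matrix.sub_mul, Matrix.mul_sub, Matrix.mul_assoc]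
  abel

theorem posteriorCov_eq_josephForm (hR : R.PosDef) (hP : P.PosSemidef) :
    posteriorCov C R P = josephForm C R P (kalmanGain C R P) := by
  have h := josephForm_sub_posteriorCov (C := C) hR hP (kalmanGain C R P)
  rw [sub_self, Matrix.zero_mul, Matrix.zero_mul] at h
  exact (sub_eq_zero.1 h).symm

theorem posteriorCov_le_josephForm (hR : R.PosDef) (hP : P.PosSemidef) (K : Matrix n p ℝ) :
    posteriorCov C R P ≤ josephForm C R P K := by
  rw [le_iff, josephForm_sub_posteriorCov hR hP]
  exact (posDef_innovationCov hR hP).posSemidef.mul_mul_transpose_same _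

theorem posSemidef_posteriorCov (hR : R.PosDef) (hP : P.PosSemidef) :
    (posteriorCov C R P).PosSemidef := by
  rw [posteriorCov_eq_josephForm hR hP]
  exact posSemidef_josephForm hR.posSemidef hP _

theorem posteriorCov_monotoneOn (hR : R.PosDef) :
    MonotoneOn (posteriorCov C R) {P | P.PosSemidef} := fun P hP P' hP' h =>
  calc posteriorCov C R P ≤ josephForm C R P (kalmanGain C R P') :=
        posteriorCov_le_josephForm hR hP _
    _ ≤ josephForm C R P' (kalmanGain C R P') := josephForm_mono _ h
    _ = posteriorCov C R P' := (posteriorCov_eq_josephForm hR hP').symm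

theorem riccatiMap_mapsTo (hR : R.PosDef) (hQ : Q.PosSemidef) :
    MapsTo (riccatiMap A C R Q) {P | P.PosSemidef} {P | P.PosSemidef} := fun _ hP =>
  ((posSemidef_posteriorCov hR hP).mul_mul_transpose_same A).add hQ

theorem riccatiMap_monotoneOn (hR : R.PosDef) :
    MonotoneOn (riccatiMap A C R Q) {P | P.PosSemidef} := fun _ hP _ hP' h =>
  add_le_add_left (mul_mul_transpose_mono A (posteriorCov_monotoneOn hR hP hP' h)) Q

end Riccati

theorem are_monotone_in_Q_general {n p : ℕ}
    (A : Matrix (Fin n) (Fin n) ℝ) (C : Matrix (Fin p) (Fin n) ℝ)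
    (R : Matrix (Fin p) (Fin p) ℝ) (Q₁ Q₂ : Matrix (Fin n) (Fin n) ℝ)
    (hR : R.PosDef) (hQ₁ : Q₁.PosDef)
    (hQ : (Q₂ - Q₁).PosSemidef)
    (P₁ P₂ : Matrix (Fin n) (Fin n) ℝ)
    (hP₂ : P₂.PosSemidef)
    (heq₂ : P₂ = A * (P₂ - P₂ * Cᵀ * (C * P₂ * Cᵀ + R)⁻¹ * C * P₂) * Aᵀ + Q₂)
    (huniq₁ : ∀ P : Matrix (Fin n) (Fin n) ℝ, P.PosSemidef →
      P = A * (P - P * Cᵀ * (C * P * Cᵀ + R)⁻¹ * C * P) * Aᵀ + Q₁ → P = P₁) :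
    (P₂ - P₁).PosSemidef := by
  set F := riccatiMap A C R Q₁
  have hmaps := riccatiMap_mapsTo (A := A) (C := C) hR hQ₁.posSemidef
  have hdesc : F P₂ ≤ P₂ :=
    calc F P₂ ≤ riccatiMap A C R Q₂ P₂ := riccatiMap_mono_noise hQ
      _ = P₂ := heq₂.symm
  have hanti : Antitone fun k => F^[k] P₂ :=
    antitone_iterate_of_monotoneOn (riccatiMap_monotoneOn hR) hmaps hP₂ hdesc
  have hpsd (k : ℕ) : 0 ≤ F^[k] P₂ := (hmaps.iterate k hP₂).nonneg
  obtain ⟨L, hL⟩ := exists_tendsto_of_antitone hanti hpsd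
  have hL_psd : L.PosSemidef := (ge_of_tendsto' hL hpsd).posSemidef
  have hfix : F L = L := isFixedPt_of_tendsto_iterate hL (continuousAt_riccatiMap hR hL_psd)
  rw [← huniq₁ L hL_psd hfix.symm]
  exact le_iff.1 (hanti.le_of_tendsto hL 0)

/-- The (unique positive semidefinite) solution of the discrete-time
algebraic Riccati equation is monotone increasing in the state noise
covariance `Q` with respect to the Loewner order. -/
theorem are_monotone_in_Q {n p : ℕ}
    (A : Matrix (Fin n) (Fin n) ℝ) (C : Matrix (Fin p) (Fin n) ℝ)
    (R : Matrix (Fin p) (Fin p) ℝ) (Q₁ Q₂ : Matrix (Fin n) (Fin n) ℝ)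
    (hR : R.PosDef) (hQ₁ : Q₁.PosDef) (hQ₂ : Q₂.PosDef)
    (hQ : (Q₂ - Q₁).PosSemidef)
    (P₁ P₂ : Matrix (Fin n) (Fin n) ℝ)
    (hP₁ : P₁.PosSemidef) (hP₂ : P₂.PosSemidef)
    (heq₁ : P₁ = A * (P₁ - P₁ * Cᵀ * (C * P₁ * Cᵀ + R)⁻¹ * C * P₁) * Aᵀ + Q₁)
    (heq₂ : P₂ = A * (P₂ - P₂ * Cᵀ * (C * P₂ * Cᵀ + R)⁻¹ * C * P₂) * Aᵀ + Q₂)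
    (huniq₁ : ∀ P : Matrix (Fin n) (Fin n) ℝ, P.PosSemidef →
      P = A * (P - P * Cᵀ * (C * P * Cᵀ + R)⁻¹ * C * P) * Aᵀ + Q₁ → P = P₁)
    (huniq₂ : ∀ P : Matrix (Fin n) (Fin n) ℝ, P.PosSemidef →
      P = A * (P - P * Cᵀ * (C * P * Cᵀ + R)⁻¹ * C * P) * Aᵀ + Q₂ → P = P₂) :
    (P₂ - P₁).PosSemidef :=
  are_monotone_in_Q_general A C R Q₁ Q₂ hR hQ₁ hQ P₁ P₂ hP₂ heq₂ huniq₁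
end

section
/- The single-step Riccati update map P ↦ A(P - P C'(C P C' + R)⁻¹ C P)A' + Q is monotone: P₁ ⪯ P₂ implies the image of P₁ is ⪯ the image of P₂ in the Loewner order. -/
/-!
Write `U(P) = P - P Cᴴ D⁻¹ C P` with `D = C P Cᴴ + R`, and let `Kᵢ = Pᵢ Cᴴ Dᵢ⁻¹` be the gains.
Since `D₂ = D₁ + C (P₂ - P₁) Cᴴ`, expanding and cancelling `Dᵢ Dᵢ⁻¹` gives
`U(P₂) - U(P₁) = (1 - K₂ C) (P₂ - P₁) (1 - K₂ C)ᴴ + (K₂ - K₁) D₁ (K₂ - K₁)ᴴ`,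
a sum of congruences of the positive semidefinite matrices `P₂ - P₁` and `D₁`.
The Riccati map is `P ↦ A U(P) Aᴴ + Q`, and congruence by `A` preserves the Loewner order.
-/

open Matrix

namespace Matrix

variable {m n α : Type*} [Fintype m] [Fintype n] [DecidableEq m] [DecidableEq n]

theorem riccati_difference_eq [CommRing α] (B : Matrix n m α) (C : Matrix m n α)
    (P₁ P₂ : Matrix n n α) {D₁ D₂ : Matrix m m α} (h₁ : IsUnit D₁.det) (h₂ : IsUnit D₂.det)
    (hD : D₂ = D₁ + C * (P₂ - P₁) * B) :
    (P₂ - P₂ * B * D₂⁻¹ * C * P₂) - (P₁ - P₁ * B * D₁⁻¹ * C * P₁) =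
      (1 - P₂ * B * D₂⁻¹ * C) * (P₂ - P₁) * (1 - B * D₂⁻¹ * C * P₂) +
        (P₂ * B * D₂⁻¹ - P₁ * B * D₁⁻¹) * D₁ * (D₂⁻¹ * C * P₂ - D₁⁻¹ * C * P₁) := by
  have hD' : D₁ = D₂ - C * (P₂ - P₁) * B := by rw [hD]; abel
  simp only [Matrix.sub_mul, Matrix.mul_sub, Matrix.one_mul, Matrix.mul_one,
    Matrix.mul_assoc, mul_nonsing_inv_cancel_left (h := h₁),
    nonsing_inv_mul_cancel_left (h := h₁)]
  rw [hD']
  simp only [Matrix.sub_mul, Matrix.mul_sub, Matrix.mul_assoc,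
    mul_nonsing_inv_cancel_left (h := h₂)]
  abel

noncomputable def kalmanUpdate [CommRing α] [StarRing α] (C : Matrix m n α) (R : Matrix m m α)
    (P : Matrix n n α) : Matrix n n α :=
  P - P * Cᴴ * (C * P * Cᴴ + R)⁻¹ * C * P

variable {𝕜 : Type*} [Field 𝕜] [PartialOrder 𝕜] [StarRing 𝕜] [StarOrderedRing 𝕜]

theorem PosSemidef.kalmanUpdate_sub_kalmanUpdate {C : Matrix m n 𝕜} {R : Matrix m m 𝕜}
    {P₁ P₂ : Matrix n n 𝕜} (hle : (P₂ - P₁).PosSemidef) (hP₁ : P₁.PosSemidef) (hR : R.PosDef) :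
    (kalmanUpdate C R P₂ - kalmanUpdate C R P₁).PosSemidef := by
  set D₁ := C * P₁ * Cᴴ + R
  set D₂ := C * P₂ * Cᴴ + R
  have hD : D₂ = D₁ + C * (P₂ - P₁) * Cᴴ := by
    simp only [D₁, D₂, Matrix.mul_sub, Matrix.sub_mul]; abel
  have hD₁ : D₁.PosDef := hR.posSemidef_add (hP₁.mul_mul_conjTranspose_same C)
  have hD₂ : D₂.PosDef := hD ▸ hD₁.add_posSemidef (hle.mul_mul_conjTranspose_same C)
  have hP₂ : P₂.IsHermitian := by simpa using hle.isHermitian.add hP₁.isHermitian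
  have hK : (P₂ * Cᴴ * D₂⁻¹ - P₁ * Cᴴ * D₁⁻¹)ᴴ = D₂⁻¹ * C * P₂ - D₁⁻¹ * C * P₁ := by
    simp only [conjTranspose_sub, conjTranspose_mul, conjTranspose_conjTranspose,
      hD₁.isHermitian.inv.eq, hD₂.isHermitian.inv.eq, hP₁.isHermitian.eq, hP₂.eq,
      Matrix.mul_assoc]
  have hM : (1 - P₂ * Cᴴ * D₂⁻¹ * C)ᴴ = 1 - Cᴴ * D₂⁻¹ * C * P₂ := by
    simp only [conjTranspose_sub, conjTranspose_one, conjTranspose_mul,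
      conjTranspose_conjTranspose, hD₂.isHermitian.inv.eq, hP₂.eq, Matrix.mul_assoc]
  unfold kalmanUpdate
  rw [riccati_difference_eq Cᴴ C P₁ P₂ ((isUnit_iff_isUnit_det _).mp hD₁.isUnit)
    ((isUnit_iff_isUnit_det _).mp hD₂.isUnit) hD, ← hM, ← hK]
  exact (hle.mul_mul_conjTranspose_same _).add (hD₁.posSemidef.mul_mul_conjTranspose_same _)

end Matrix

theorem riccati_map_monotone_general {n p : ℕ}
    (A : Matrix (Fin n) (Fin n) ℝ) (C : Matrix (Fin p) (Fin n) ℝ)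
    (Q : Matrix (Fin n) (Fin n) ℝ) (R : Matrix (Fin p) (Fin p) ℝ)
    (hR : R.PosDef)
    (P₁ P₂ : Matrix (Fin n) (Fin n) ℝ)
    (hP₁ : P₁.PosSemidef)
    (hle : (P₂ - P₁).PosSemidef) :
    ((A * (P₂ - P₂ * Cᵀ * (C * P₂ * Cᵀ + R)⁻¹ * C * P₂) * Aᵀ + Q) -
      (A * (P₁ - P₁ * Cᵀ * (C * P₁ * Cᵀ + R)⁻¹ * C * P₁) * Aᵀ + Q)).PosSemidef := by
  simp only [← conjTranspose_eq_transpose_of_trivial]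
  rw [add_sub_add_right_eq_sub, ← Matrix.sub_mul, ← Matrix.mul_sub]
  exact (hle.kalmanUpdate_sub_kalmanUpdate hP₁ hR).mul_mul_conjTranspose_same A

/-- The single-step Riccati update map
`P ↦ A (P - P Cᵀ (C P Cᵀ + R)⁻¹ C P) Aᵀ + Q` is monotone with respect to the
Loewner order on positive semidefinite matrices. -/
theorem riccati_map_monotone {n p : ℕ}
    (A : Matrix (Fin n) (Fin n) ℝ) (C : Matrix (Fin p) (Fin n) ℝ)
    (Q : Matrix (Fin n) (Fin n) ℝ) (R : Matrix (Fin p) (Fin p) ℝ)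
    (hQ : Q.PosSemidef) (hR : R.PosDef)
    (P₁ P₂ : Matrix (Fin n) (Fin n) ℝ)
    (hP₁ : P₁.PosSemidef) (hP₂ : P₂.PosSemidef)
    (hle : (P₂ - P₁).PosSemidef) :
    ((A * (P₂ - P₂ * Cᵀ * (C * P₂ * Cᵀ + R)⁻¹ * C * P₂) * Aᵀ + Q) -
      (A * (P₁ - P₁ * Cᵀ * (C * P₁ * Cᵀ + R)⁻¹ * C * P₁) * Aᵀ + Q)).PosSemidef :=
  riccati_map_monotone_general A C Q R hR P₁ P₂ hP₁ hle
end
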